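/- arXiv:math/0106107 — 2 statements merged into one kernel-verified Lean document; each statement's English description precedes it below -/
import Mathlib

section
/- Let E₁ and E₂ be Banach spaces over 𝕜, let 𝒜₁ ⊆ B(E₁) and 𝒜₂ ⊆ B(E₂) be standard subalgebras, and let T : 𝒜₁ → 𝒜₂ be a biseparating linear bijection. Then for every A ∈ 𝒜₁ of rank one, the operator T(A) has rank one. -/
set_option synthInstance.maxHeartbeats 400000
set_option maxHeartbeats 1000000

/-- A subalgebra of `B(E)` is *standard* if it contains every continuous finite-rank
operator (it contains the identity automatically, being a subalgebra). -/
def IsStandardSubalgebra (𝕜 : Type*) [RCLike 𝕜] {E : Type*} [NormedAddCommGroup E]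
    [NormedSpace 𝕜 E] (𝒜 : Subalgebra 𝕜 (E →L[𝕜] E)) : Prop :=
  ∀ A : E →L[𝕜] E, FiniteDimensional 𝕜 (LinearMap.range (A : E →ₗ[𝕜] E)) → A ∈ 𝒜

/-!
In a standard algebra `𝒜` the right annihilator of `a` determines `ker a`, since `𝒜` contains
the rank-one operators `f ⊗ x`. Hence `a` has rank one iff `a ≠ 0` and its right annihilator is
maximal among those of nonzero elements: a rank-one operator has a kernel of codimension one;
conversely, if `a x₀` and `a y` were independent, a functional `g` killing `a x₀` but not `a y`
would give an element `(g ∘ a) ⊗ v` of `𝒜` whose kernel strictly contains `ker a`.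
This characterization uses only zero products, so biseparating bijections preserve it.
-/

def HasMaximalRightAnnihilator {R : Type*} [Mul R] [Zero R] (a : R) : Prop :=
  a ≠ 0 ∧ ∀ b : R, b ≠ 0 → (∀ c, a * c = 0 → b * c = 0) → ∀ c, b * c = 0 → a * c = 0

theorem HasMaximalRightAnnihilator.apply_of_biseparating {R S : Type*} [Mul R] [Zero R]
    [Mul S] [Zero S] {f : R → S} (hf : Function.Bijective f) (hf0 : f 0 = 0)
    (hsep : ∀ a b, a * b = 0 → f a * f b = 0) (hsep' : ∀ a b, f a * f b = 0 → a * b = 0)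
    {a : R} (ha : HasMaximalRightAnnihilator a) : HasMaximalRightAnnihilator (f a) := by
  refine ⟨fun h => ha.1 (hf.1 (h.trans hf0.symm)), fun b' hb' hann' => ?_⟩
  obtain ⟨b, rfl⟩ := hf.2 b'
  have hb : b ≠ 0 := by rintro rfl; exact hb' hf0
  have hann : ∀ c, a * c = 0 → b * c = 0 := fun c hc => hsep' _ _ (hann' _ (hsep _ _ hc))
  intro c' hc'
  obtain ⟨c, rfl⟩ := hf.2 c'
  exact hsep _ _ (ha.2 b hb hann c (hsep' _ _ hc'))

theorem SeparatingDual.exists_eq_zero_ne_zero_of_notMem_span {R V : Type*} [Field R]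
    [AddCommGroup V] [TopologicalSpace R] [TopologicalSpace V] [IsTopologicalRing R]
    [Module R V] [SeparatingDual R V] {u v : V} (hu : u ≠ 0) (hv : v ∉ R ∙ u) :
    ∃ g : StrongDual R V, g u = 0 ∧ g v ≠ 0 := by
  obtain ⟨f, hf⟩ := exists_eq_one (R := R) hu
  have hw : v - f v • u ≠ 0 := fun h =>
    hv (Submodule.mem_span_singleton.mpr ⟨f v, (sub_eq_zero.mp h).symm⟩)
  obtain ⟨h, hh⟩ := exists_ne_zero (R := R) hw
  -- `g` is `h` composed with the projection `x ↦ x - f x • u` onto `ker f` along `u`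
  refine ⟨h - h u • f, by simp [hf], ?_⟩
  simpa [mul_comm] using hh

theorem LinearMap.isCoatom_ker_of_finrank_range_eq_one {K V W : Type*} [DivisionRing K]
    [AddCommGroup V] [Module K V] [AddCommGroup W] [Module K W] {f : V →ₗ[K] W}
    (hf : Module.finrank K (LinearMap.range f) = 1) : IsCoatom (LinearMap.ker f) := by
  have := isSimpleModule_iff_finrank_eq_one.mpr hf
  simpa using LinearMap.isCoatom_ker_of_surjective f.surjective_rangeRestrict

theorem ContinuousLinearMap.ker_smulRight_of_ne_zero {R M : Type*} [DivisionRing R]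
    [TopologicalSpace R] [AddCommGroup M] [TopologicalSpace M] [Module R M]
    [ContinuousSMul R M] (f : StrongDual R M) {v : M} (hv : v ≠ 0) :
    LinearMap.ker (f.smulRight v : M →ₗ[R] M) = LinearMap.ker (f : M →ₗ[R] R) := by
  ext x
  simp [hv]

section OperatorSubalgebra

variable {𝕜 : Type*} [RCLike 𝕜] {E : Type*} [NormedAddCommGroup E] [NormedSpace 𝕜 E]
  {𝒜 : Subalgebra 𝕜 (E →L[𝕜] E)}

namespace Subalgebra

theorem mul_eq_zero_iff_range_le_ker {a c : 𝒜} :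
    a * c = 0 ↔ LinearMap.range (c : E →ₗ[𝕜] E) ≤ LinearMap.ker (a : E →ₗ[𝕜] E) := by
  rw [← Subalgebra.coe_eq_zero, Subalgebra.coe_mul, LinearMap.range_le_ker_iff,
    ← ContinuousLinearMap.toLinearMap_comp, ← ContinuousLinearMap.mul_def]
  exact (ContinuousLinearMap.coe_injective.eq_iff' rfl).symm

theorem ker_eq_top_iff_eq_zero {a : 𝒜} : LinearMap.ker (a : E →ₗ[𝕜] E) = ⊤ ↔ a = 0 := by
  rw [LinearMap.ker_eq_top, ← ContinuousLinearMap.toLinearMap_zero, ContinuousLinearMap.coe_inj,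
    Subalgebra.coe_eq_zero]

end Subalgebra

namespace IsStandardSubalgebra

theorem smulRight_mem (h𝒜 : IsStandardSubalgebra 𝕜 𝒜) (f : StrongDual 𝕜 E) (x : E) :
    f.smulRight x ∈ 𝒜 := by
  refine h𝒜 _ (Submodule.finiteDimensional_of_le (S₂ := 𝕜 ∙ x) ?_)
  rintro _ ⟨y, rfl⟩
  exact Submodule.smul_mem _ _ (Submodule.mem_span_singleton_self x)

theorem forall_mul_eq_zero_imp_iff_ker_le (h𝒜 : IsStandardSubalgebra 𝕜 𝒜) {a b : 𝒜} :
    (∀ c : 𝒜, a * c = 0 → b * c = 0) ↔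
      LinearMap.ker (a : E →ₗ[𝕜] E) ≤ LinearMap.ker (b : E →ₗ[𝕜] E) := by
  simp only [Subalgebra.mul_eq_zero_iff_range_le_ker]
  refine ⟨fun h x hx => ?_, fun h c hc => hc.trans h⟩
  rcases eq_or_ne x 0 with rfl | hx0
  · exact Submodule.zero_mem _
  obtain ⟨f, hf⟩ := SeparatingDual.exists_eq_one (R := 𝕜) hx0
  have hrange : LinearMap.range (f.smulRight x : E →ₗ[𝕜] E) ≤ LinearMap.ker (a : E →ₗ[𝕜] E) := by
    rintro _ ⟨y, rfl⟩
    exact Submodule.smul_mem _ _ hx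
  simpa [hf] using h ⟨f.smulRight x, h𝒜.smulRight_mem f x⟩ hrange ⟨x, rfl⟩

theorem hasMaximalRightAnnihilator_iff (h𝒜 : IsStandardSubalgebra 𝕜 𝒜) {a : 𝒜} :
    HasMaximalRightAnnihilator a ↔ a ≠ 0 ∧ ∀ b : 𝒜, b ≠ 0 →
      LinearMap.ker (a : E →ₗ[𝕜] E) ≤ LinearMap.ker (b : E →ₗ[𝕜] E) →
        LinearMap.ker (b : E →ₗ[𝕜] E) ≤ LinearMap.ker (a : E →ₗ[𝕜] E) := by
  simp only [HasMaximalRightAnnihilator, h𝒜.forall_mul_eq_zero_imp_iff_ker_le]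

theorem hasMaximalRightAnnihilator_of_finrank_range_eq_one (h𝒜 : IsStandardSubalgebra 𝕜 𝒜)
    {a : 𝒜} (ha : Module.finrank 𝕜 (LinearMap.range (a : E →ₗ[𝕜] E)) = 1) :
    HasMaximalRightAnnihilator a := by
  obtain ⟨hker_ne_top, hker_max⟩ :=
    isCoatom_iff_ge_of_le.mp (LinearMap.isCoatom_ker_of_finrank_range_eq_one ha)
  exact h𝒜.hasMaximalRightAnnihilator_iff.mpr
    ⟨Subalgebra.ker_eq_top_iff_eq_zero.not.mp hker_ne_top,
      fun b hb => hker_max _ (Subalgebra.ker_eq_top_iff_eq_zero.not.mpr hb)⟩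

theorem ker_comp_le_ker_of_hasMaximalRightAnnihilator (h𝒜 : IsStandardSubalgebra 𝕜 𝒜) {a : 𝒜}
    (ha : HasMaximalRightAnnihilator a) (g : StrongDual 𝕜 E) (hg : g ∘L (a : E →L[𝕜] E) ≠ 0) :
    LinearMap.ker (g ∘L (a : E →L[𝕜] E) : E →ₗ[𝕜] 𝕜) ≤ LinearMap.ker (a : E →ₗ[𝕜] E) := by
  obtain ⟨v, hv⟩ := DFunLike.ne_iff.mp hg
  have hv0 : v ≠ 0 := by rintro rfl; simp at hv
  let b : 𝒜 := ⟨(g ∘L (a : E →L[𝕜] E)).smulRight v, h𝒜.smulRight_mem _ v⟩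
  have hker_b : LinearMap.ker (b : E →ₗ[𝕜] E) =
      LinearMap.ker (g ∘L (a : E →L[𝕜] E) : E →ₗ[𝕜] 𝕜) :=
    ContinuousLinearMap.ker_smulRight_of_ne_zero _ hv0
  rw [← hker_b]
  refine (h𝒜.hasMaximalRightAnnihilator_iff.mp ha).2 b ?_ ?_
  · rw [ne_eq, ← Subalgebra.ker_eq_top_iff_eq_zero, hker_b, LinearMap.ker_eq_top]
    exact fun h => hg (ContinuousLinearMap.coe_injective h)
  · intro x hx
    rw [hker_b, LinearMap.mem_ker, ContinuousLinearMap.toLinearMap_comp, LinearMap.comp_apply,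
      LinearMap.mem_ker.mp hx, map_zero]

theorem finrank_range_eq_one_of_hasMaximalRightAnnihilator (h𝒜 : IsStandardSubalgebra 𝕜 𝒜)
    {a : 𝒜} (ha : HasMaximalRightAnnihilator a) :
    Module.finrank 𝕜 (LinearMap.range (a : E →ₗ[𝕜] E)) = 1 := by
  obtain ⟨x₀, hx₀⟩ : ∃ x, (a : E →L[𝕜] E) x ≠ 0 := by
    by_contra! h
    exact ha.1 (Subtype.ext (ContinuousLinearMap.ext h))
  suffices LinearMap.range (a : E →ₗ[𝕜] E) = 𝕜 ∙ (a : E →L[𝕜] E) x₀ by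
    rw [this, finrank_span_singleton hx₀]
  refine le_antisymm ?_ (Submodule.span_singleton_le_iff_mem _ _ |>.mpr ⟨x₀, rfl⟩)
  rintro _ ⟨y, rfl⟩
  by_contra hy
  obtain ⟨g, hg₀, hgy⟩ := SeparatingDual.exists_eq_zero_ne_zero_of_notMem_span hx₀ hy
  exact hx₀ (h𝒜.ker_comp_le_ker_of_hasMaximalRightAnnihilator ha g
    (DFunLike.ne_iff.mpr ⟨y, hgy⟩) hg₀)

end IsStandardSubalgebra

end OperatorSubalgebra

theorem biseparating_maps_rank_one_to_rank_one_general
    {𝕜 : Type*} [RCLike 𝕜]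
    {E₁ E₂ : Type*} [NormedAddCommGroup E₁] [NormedSpace 𝕜 E₁]
    [NormedAddCommGroup E₂] [NormedSpace 𝕜 E₂]
    (𝒜₁ : Subalgebra 𝕜 (E₁ →L[𝕜] E₁)) (𝒜₂ : Subalgebra 𝕜 (E₂ →L[𝕜] E₂))
    (h𝒜₁ : IsStandardSubalgebra 𝕜 𝒜₁) (h𝒜₂ : IsStandardSubalgebra 𝕜 𝒜₂)
    (T : 𝒜₁ →ₗ[𝕜] 𝒜₂) (hbij : Function.Bijective T)
    (hsep : ∀ a b : 𝒜₁, a * b = 0 → T a * T b = 0)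
    (hsep' : ∀ a b : 𝒜₁, T a * T b = 0 → a * b = 0) :
    ∀ A : 𝒜₁, Module.finrank 𝕜 (LinearMap.range ((A : E₁ →L[𝕜] E₁) : E₁ →ₗ[𝕜] E₁)) = 1 →
      Module.finrank 𝕜 (LinearMap.range ((T A : E₂ →L[𝕜] E₂) : E₂ →ₗ[𝕜] E₂)) = 1 :=
  fun _ hA => h𝒜₂.finrank_range_eq_one_of_hasMaximalRightAnnihilator <|
    (h𝒜₁.hasMaximalRightAnnihilator_of_finrank_range_eq_one hA).apply_of_biseparating
      hbij (map_zero T) hsep hsep'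

theorem biseparating_maps_rank_one_to_rank_one
    {𝕜 : Type*} [RCLike 𝕜]
    {E₁ E₂ : Type*} [NormedAddCommGroup E₁] [NormedSpace 𝕜 E₁] [CompleteSpace E₁]
    [NormedAddCommGroup E₂] [NormedSpace 𝕜 E₂] [CompleteSpace E₂]
    (𝒜₁ : Subalgebra 𝕜 (E₁ →L[𝕜] E₁)) (𝒜₂ : Subalgebra 𝕜 (E₂ →L[𝕜] E₂))
    (h𝒜₁ : IsStandardSubalgebra 𝕜 𝒜₁) (h𝒜₂ : IsStandardSubalgebra 𝕜 𝒜₂)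
    (T : 𝒜₁ →ₗ[𝕜] 𝒜₂) (hbij : Function.Bijective T)
    (hsep : ∀ a b : 𝒜₁, a * b = 0 → T a * T b = 0)
    (hsep' : ∀ a b : 𝒜₁, T a * T b = 0 → a * b = 0) :
    ∀ A : 𝒜₁, Module.finrank 𝕜 (LinearMap.range ((A : E₁ →L[𝕜] E₁) : E₁ →ₗ[𝕜] E₁)) = 1 →
      Module.finrank 𝕜 (LinearMap.range ((T A : E₂ →L[𝕜] E₂) : E₂ →ₗ[𝕜] E₂)) = 1 :=
  biseparating_maps_rank_one_to_rank_one_general 𝒜₁ 𝒜₂ h𝒜₁ h𝒜₂ T hbij hsep hsep'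
end

section
/- Let E₁ and E₂ be Banach spaces over 𝕜, let 𝒜₁ ⊆ B(E₁) and 𝒜₂ ⊆ B(E₂) be standard subalgebras, and let T : 𝒜₁ → 𝒜₂ be a biseparating linear bijection. Suppose S : E₁ → E₂ and Ψ : E₁* → E₂* are (plain) linear bijections satisfying T(e ⊗ e*) = S(e) ⊗ Ψ(e*) for all e ∈ E₁ and e* ∈ E₁*. Then S is continuous. -/
set_option synthInstance.maxHeartbeats 400000
set_option maxHeartbeats 1000000

/-- The rank-one operator `e ⊗ e*` sending `e'` to `e*(e') • e`. -/
noncomputable def rankOne {𝕜 : Type*} [RCLike 𝕜] {E : Type*} [NormedAddCommGroup E]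
    [NormedSpace 𝕜 E] (e : E) (f : E →L[𝕜] 𝕜) : E →L[𝕜] E :=
  f.smulRight e

/-!
Since `e ⊗ f` squares to `f e • (e ⊗ f)`, it is square-zero exactly when `f e = 0`. The separating
map `T` preserves square-zero elements, so `f e = 0` forces `(Ψ f) (S e) = 0`. Thus
`ker (Ψ f ∘ S)` contains `ker f`, which makes `Ψ f ∘ S` a multiple of `f` and hence continuous.
As `Ψ` is onto `E₂*`, the graph of `S` is cut out by the closed conditions `g y = g (S x)`, and
the closed graph theorem concludes.
-/

theorem LinearMap.continuous_of_ker_le_ker {𝕜 E : Type*} [Field 𝕜] [TopologicalSpace 𝕜]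
    [ContinuousMul 𝕜] [AddCommGroup E] [Module 𝕜 E] [TopologicalSpace E]
    (φ : E →ₗ[𝕜] 𝕜) (f : E →L[𝕜] 𝕜) (h : LinearMap.ker (f : E →ₗ[𝕜] 𝕜) ≤ LinearMap.ker φ) :
    Continuous φ := by
  have hspan := mem_span_of_iInf_ker_le_ker (L := fun _ : Unit ↦ (f : E →ₗ[𝕜] 𝕜)) (by simpa)
  rw [Set.range_const, Submodule.mem_span_singleton] at hspan
  obtain ⟨c, rfl⟩ := hspan
  exact f.continuous.const_smul c

theorem LinearMap.continuous_of_forall_continuous_dual_comp {𝕜 E F : Type*}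
    [NontriviallyNormedField 𝕜] [NormedAddCommGroup E] [NormedSpace 𝕜 E] [CompleteSpace E]
    [NormedAddCommGroup F] [NormedSpace 𝕜 F] [CompleteSpace F] [SeparatingDual 𝕜 F]
    (S : E →ₗ[𝕜] F) (h : ∀ g : StrongDual 𝕜 F, Continuous (g ∘ S)) : Continuous S := by
  apply S.continuous_of_isClosed_graph
  have hgraph : (S.graph : Set (E × F)) = ⋂ g : StrongDual 𝕜 F, {p | g p.2 = g (S p.1)} := by
    ext p
    simp only [SetLike.mem_coe, LinearMap.mem_graph_iff, Set.mem_iInter, Set.mem_ofPred_eq]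
    exact SeparatingDual.eq_iff_forall_dual_eq (R := 𝕜)
  rw [hgraph]
  exact isClosed_iInter fun g ↦ isClosed_eq (g.continuous.comp continuous_snd)
    ((h g).comp continuous_fst)

section RankOne

variable {𝕜 : Type*} [RCLike 𝕜] {E : Type*} [NormedAddCommGroup E] [NormedSpace 𝕜 E]

theorem rankOne_mem_of_isStandardSubalgebra {𝒜 : Subalgebra 𝕜 (E →L[𝕜] E)}
    (h𝒜 : IsStandardSubalgebra 𝕜 𝒜) (e : E) (f : E →L[𝕜] 𝕜) : rankOne e f ∈ 𝒜 := by
  refine h𝒜 _ (Submodule.finiteDimensional_of_le (S₂ := 𝕜 ∙ e) ?_)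
  rintro _ ⟨x, rfl⟩
  exact Submodule.smul_mem _ _ (Submodule.mem_span_singleton_self e)

theorem rankOne_mul_rankOne (e e' : E) (f f' : E →L[𝕜] 𝕜) :
    rankOne e f * rankOne e' f' = f e' • rankOne e f' := by
  ext x
  simp [rankOne, smul_smul, mul_comm]

theorem apply_eq_zero_of_rankOne_mul_self_eq_zero {e : E} {f : E →L[𝕜] 𝕜}
    (h : rankOne e f * rankOne e f = 0) : f e = 0 := by
  rw [rankOne_mul_rankOne] at h
  have h' : f e = 0 ∨ e = 0 := by simpa [rankOne] using congr($h e)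
  rcases h' with hfe | rfl
  exacts [hfe, map_zero f]

end RankOne

theorem continuity_of_S_of_biseparating_general
    {𝕜 : Type*} [RCLike 𝕜]
    {E₁ E₂ : Type*} [NormedAddCommGroup E₁] [NormedSpace 𝕜 E₁] [CompleteSpace E₁]
    [NormedAddCommGroup E₂] [NormedSpace 𝕜 E₂] [CompleteSpace E₂]
    (𝒜₁ : Subalgebra 𝕜 (E₁ →L[𝕜] E₁)) (𝒜₂ : Subalgebra 𝕜 (E₂ →L[𝕜] E₂))
    (h𝒜₁ : IsStandardSubalgebra 𝕜 𝒜₁)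
    (T : 𝒜₁ →ₗ[𝕜] 𝒜₂)
    (hsep : ∀ a b : 𝒜₁, a * b = 0 → T a * T b = 0)
    (S : E₁ →ₗ[𝕜] E₂) (Ψ : (E₁ →L[𝕜] 𝕜) →ₗ[𝕜] (E₂ →L[𝕜] 𝕜))
    (hΨ : Function.Bijective Ψ)
    (hrep : ∀ (e : E₁) (f : E₁ →L[𝕜] 𝕜) (h : rankOne e f ∈ 𝒜₁),
      ((T ⟨rankOne e f, h⟩ : E₂ →L[𝕜] E₂)) = rankOne (S e) (Ψ f)) :
    Continuous S := by
  have hker (f : E₁ →L[𝕜] 𝕜) :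
      LinearMap.ker (f : E₁ →ₗ[𝕜] 𝕜) ≤ LinearMap.ker ((Ψ f : E₂ →ₗ[𝕜] 𝕜) ∘ₗ S) := by
    intro e (hfe : f e = 0)
    let a : 𝒜₁ := ⟨rankOne e f, rankOne_mem_of_isStandardSubalgebra h𝒜₁ e f⟩
    have haa : a * a = 0 := Subtype.ext <| by simp [a, rankOne_mul_rankOne, hfe]
    apply apply_eq_zero_of_rankOne_mul_self_eq_zero
    rw [← hrep e f a.2]
    exact congr(Subtype.val $(hsep a a haa))
  refine S.continuous_of_forall_continuous_dual_comp fun g ↦ ?_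
  obtain ⟨f, rfl⟩ := hΨ.2 g
  exact LinearMap.continuous_of_ker_le_ker _ f (hker f)

theorem continuity_of_S_of_biseparating
    {𝕜 : Type*} [RCLike 𝕜]
    {E₁ E₂ : Type*} [NormedAddCommGroup E₁] [NormedSpace 𝕜 E₁] [CompleteSpace E₁]
    [NormedAddCommGroup E₂] [NormedSpace 𝕜 E₂] [CompleteSpace E₂]
    (𝒜₁ : Subalgebra 𝕜 (E₁ →L[𝕜] E₁)) (𝒜₂ : Subalgebra 𝕜 (E₂ →L[𝕜] E₂))
    (h𝒜₁ : IsStandardSubalgebra 𝕜 𝒜₁) (h𝒜₂ : IsStandardSubalgebra 𝕜 𝒜₂)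
    (T : 𝒜₁ →ₗ[𝕜] 𝒜₂) (hbij : Function.Bijective T)
    (hsep : ∀ a b : 𝒜₁, a * b = 0 → T a * T b = 0)
    (hsep' : ∀ a b : 𝒜₁, T a * T b = 0 → a * b = 0)
    (S : E₁ →ₗ[𝕜] E₂) (Ψ : (E₁ →L[𝕜] 𝕜) →ₗ[𝕜] (E₂ →L[𝕜] 𝕜))
    (hS : Function.Bijective S) (hΨ : Function.Bijective Ψ)
    (hrep : ∀ (e : E₁) (f : E₁ →L[𝕜] 𝕜) (h : rankOne e f ∈ 𝒜₁),
      ((T ⟨rankOne e f, h⟩ : E₂ →L[𝕜] E₂)) = rankOne (S e) (Ψ f)) :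
    Continuous S :=
  continuity_of_S_of_biseparating_general 𝒜₁ 𝒜₂ h𝒜₁ T hsep S Ψ hΨ hrep
end
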